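/- arXiv:2211.01905 — 2 statements merged into one kernel-verified Lean document; each statement's English description precedes it below -/
import Mathlib

section
/- For every digraph H, the adaptive width of the contour of H equals the adaptive width of the contour of the condensation H/∼, that is, aw(Γ(H)) = aw(Γ(H/∼)). -/
noncomputable section

/-! ### Hypergraphs -/

/-- A hypergraph: a vertex set together with a set of nonempty hyperedges. -/
structure Hypergraph' (V : Type) where
  verts : Set V
  edges : Set (Set V)
  edge_nonempty : ∀ e ∈ edges, e.Nonempty
  edge_subset : ∀ e ∈ edges, e ⊆ verts

namespace Hypergraph'

variable {V : Type}

/-- An independent set: no two of its vertices lie in a common hyperedge. -/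
def IsIndepSet (H : Hypergraph' V) (I : Set V) : Prop :=
  I ⊆ H.verts ∧ ∀ u ∈ I, ∀ v ∈ I, u ≠ v → ∀ e ∈ H.edges, ¬(u ∈ e ∧ v ∈ e)

/-- The independence number `α`. -/
def indepNum (H : Hypergraph' V) : ℕ :=
  sSup {n | ∃ I : Set V, H.IsIndepSet I ∧ I.ncard = n}

/-- A fractional independent set: `μ : V(H) → [0,1]` with `∑_{v ∈ e} μ v ≤ 1` for each edge. -/
def IsFracIndep (H : Hypergraph' V) (μ : V → ℝ) : Prop :=
  (∀ v, 0 ≤ μ v ∧ μ v ≤ 1) ∧ (∀ v, v ∉ H.verts → μ v = 0) ∧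
    ∀ e ∈ H.edges, (∑ᶠ v ∈ e, μ v) ≤ 1

/-- The weight of a (fractional independent) vertex-weighting. -/
def weight (H : Hypergraph' V) (μ : V → ℝ) : ℝ := ∑ᶠ v ∈ H.verts, μ v

/-- The fractional independence number `α*`. -/
def fracIndepNum (H : Hypergraph' V) : ℝ :=
  sSup {w | ∃ μ : V → ℝ, H.IsFracIndep μ ∧ H.weight μ = w}

/-- A fractional edge cover of a set `X` of vertices. -/
def IsFracEdgeCover (H : Hypergraph' V) (X : Set V) (γ : Set V → ℝ) : Prop :=
  (∀ e, 0 ≤ γ e) ∧ (∀ e, e ∉ H.edges → γ e = 0) ∧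
    ∀ v ∈ X, 1 ≤ ∑ᶠ e ∈ {e ∈ H.edges | v ∈ e}, γ e

/-- The weight of an edge-weighting. -/
def coverWeight (H : Hypergraph' V) (γ : Set V → ℝ) : ℝ := ∑ᶠ e ∈ H.edges, γ e

/-- `ρ*_H(X)`: the fractional edge cover number of a set `X` of vertices. -/
def fracCoverOf (H : Hypergraph' V) (X : Set V) : ℝ :=
  sInf {w | ∃ γ : Set V → ℝ, H.IsFracEdgeCover X γ ∧ H.coverWeight γ = w}

/-- The fractional edge cover number `ρ*(H)`. -/
def fracEdgeCoverNum (H : Hypergraph' V) : ℝ := H.fracCoverOf H.verts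

/-- A tree decomposition of a hypergraph. -/
structure TreeDecomp (H : Hypergraph' V) where
  n : ℕ
  tree : SimpleGraph (Fin n)
  isTree : tree.IsTree
  bag : Fin n → Set V
  bag_subset : ∀ t, bag t ⊆ H.verts
  verts_covered : ∀ v ∈ H.verts, ∃ t, v ∈ bag t
  edges_covered : ∀ e ∈ H.edges, ∃ t, e ⊆ bag t
  bags_connected : ∀ (v : V) (t₁ t₂ : Fin n) (h₁ : v ∈ bag t₁) (h₂ : v ∈ bag t₂),
    (tree.induce {t | v ∈ bag t}).Reachable ⟨t₁, h₁⟩ ⟨t₂, h₂⟩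

/-- The `μ`-width of a tree decomposition: the maximum `μ`-weight of a bag. -/
def TreeDecomp.muWidth {H : Hypergraph' V} (td : H.TreeDecomp) (μ : V → ℝ) : ℝ :=
  ⨆ t, ∑ᶠ v ∈ td.bag t, μ v

/-- The `μ`-width of a hypergraph: minimum `μ`-width over tree decompositions. -/
def muWidth (H : Hypergraph' V) (μ : V → ℝ) : ℝ :=
  sInf {w | ∃ td : H.TreeDecomp, td.muWidth μ = w}

/-- The adaptive width `aw(H)`: supremum of the `μ`-widths over fractional
independent sets `μ`. -/
def adaptiveWidth (H : Hypergraph' V) : ℝ :=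
  sSup {w | ∃ μ : V → ℝ, H.IsFracIndep μ ∧ H.muWidth μ = w}

/-- The fractional hypertreewidth `fhtw(H)`. -/
def fhtw (H : Hypergraph' V) : ℝ :=
  sInf {w | ∃ td : H.TreeDecomp, (⨆ t, H.fracCoverOf (td.bag t)) = w}

/-- Add a new vertex `v'` to the hypergraph and replace the hyperedge `e` by `e ∪ {v'}`. -/
def extendEdge (H : Hypergraph' V) (e : Set V) (he : e ∈ H.edges) (v' : V) :
    Hypergraph' V where
  verts := insert v' H.verts
  edges := (H.edges \ {e}) ∪ {insert v' e}
  edge_nonempty := by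
    rintro f (⟨hf, -⟩ | hf)
    · exact H.edge_nonempty f hf
    · rw [Set.mem_singleton_iff] at hf; subst hf; exact ⟨v', Set.mem_insert _ _⟩
  edge_subset := by
    rintro f (⟨hf, -⟩ | hf)
    · exact (H.edge_subset f hf).trans (Set.subset_insert _ _)
    · rw [Set.mem_singleton_iff] at hf; subst hf
      exact Set.insert_subset_insert (H.edge_subset e he)

end Hypergraph'

/-! ### Digraphs -/

namespace Digraph

variable {V A B : Type}

/-- `u` reaches `v` by a directed path (possibly of length 0). -/
def Reaches (G : Digraph V) (u v : V) : Prop := Relation.ReflTransGen G.Adj u v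

/-- `R(u)`: the set of vertices reachable from `u` (including `u`). -/
def reachSet (G : Digraph V) (u : V) : Set V := {v | G.Reaches u v}

/-- The setoid whose classes are the strongly connected components. -/
def sccSetoid (G : Digraph V) : Setoid V where
  r u v := G.Reaches u v ∧ G.Reaches v u
  iseqv := ⟨fun _ => ⟨.refl, .refl⟩, fun h => ⟨h.2, h.1⟩,
    fun h₁ h₂ => ⟨h₁.1.trans h₂.1, h₂.2.trans h₁.2⟩⟩

/-- The condensation `H/∼`: the loop-free DAG obtained by contracting each strongly
connected component to a single vertex. -/
def cond (G : Digraph V) : Digraph (Quotient G.sccSetoid) where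
  Adj X Y := X ≠ Y ∧ ∃ a b, Quotient.mk G.sccSetoid a = X ∧
    Quotient.mk G.sccSetoid b = Y ∧ G.Adj a b

/-- `v` lies in a source component: its strongly connected component is not
reachable from any other component. -/
def InSourceComp (G : Digraph V) (v : V) : Prop := ∀ u, G.Reaches u v → G.Reaches v u

/-- `v` is a source: a vertex of in-degree `0`. -/
def IsSrc (G : Digraph V) (v : V) : Prop := ∀ u, ¬ G.Adj u v

/-- The reachability hypergraph `R(H)` of a digraph: vertices `V(H)`, one hyperedge
`R(s)` for each (representative `s` of a) source component. -/
def reachHyp (G : Digraph V) : Hypergraph' V where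
  verts := Set.univ
  edges := {e | ∃ s, G.InSourceComp s ∧ e = G.reachSet s}
  edge_nonempty := by rintro e ⟨s, -, rfl⟩; exact ⟨s, Relation.ReflTransGen.refl⟩
  edge_subset := fun e _ => Set.subset_univ e

/-- The contour `Γ(H)` of a digraph: the reachability hypergraph with all vertices of
source components deleted (empty hyperedges discarded). -/
def contour (G : Digraph V) : Hypergraph' V where
  verts := {v | ¬ G.InSourceComp v}
  edges := {e | (∃ s, G.InSourceComp s ∧
    e = G.reachSet s \ {v | G.InSourceComp v}) ∧ e.Nonempty}
  edge_nonempty := fun _ he => he.2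
  edge_subset := by rintro e ⟨⟨s, -, rfl⟩, -⟩ v hv; exact hv.2

/-- The reachability hypergraph of a DAG: one hyperedge `R(s)` for each in-degree `0`
vertex `s`. -/
def dagReachHyp (G : Digraph V) : Hypergraph' V where
  verts := Set.univ
  edges := {e | ∃ s, G.IsSrc s ∧ e = G.reachSet s}
  edge_nonempty := by rintro e ⟨s, -, rfl⟩; exact ⟨s, Relation.ReflTransGen.refl⟩
  edge_subset := fun e _ => Set.subset_univ e

/-- The contour of a DAG: the reachability hypergraph with all sources deleted. -/
def dagContour (G : Digraph V) : Hypergraph' V where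
  verts := {v | ¬ G.IsSrc v}
  edges := {e | (∃ s, G.IsSrc s ∧ e = G.reachSet s \ {v | G.IsSrc v}) ∧ e.Nonempty}
  edge_nonempty := fun _ he => he.2
  edge_subset := by rintro e ⟨⟨s, -, rfl⟩, -⟩ v hv; exact hv.2

/-- A homomorphism of digraphs: a map preserving arcs. -/
def IsHom (H : Digraph A) (G : Digraph B) (φ : A → B) : Prop :=
  ∀ ⦃u v⦄, H.Adj u v → G.Adj (φ u) (φ v)

/-- The tensor product of digraphs. -/
def tensor (G : Digraph A) (F : Digraph B) : Digraph (A × B) where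
  Adj x y := G.Adj x.1 y.1 ∧ F.Adj x.2 y.2

/-- The induced subdigraph on a set of vertices. -/
def induce (G : Digraph A) (S : Set A) : Digraph S where
  Adj a b := G.Adj a.1 b.1

/-- The quotient digraph `H/σ` of a digraph by a partition (setoid) of its vertices. -/
def quot (H : Digraph A) (σ : Setoid A) : Digraph (Quotient σ) where
  Adj X Y := ∃ a b, Quotient.mk σ a = X ∧ Quotient.mk σ b = Y ∧ H.Adj a b

/-- A loop-free digraph. -/
def LoopFree (H : Digraph A) : Prop := ∀ v, ¬ H.Adj v v

/-- A digraph without directed cycles (in particular, without loops). -/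
def IsAcyclic (H : Digraph A) : Prop := ∀ u v, H.Adj u v → ¬ H.Reaches v u

/-- A canonical DAG: a DAG in which every vertex has in-degree 0 or out-degree 0. -/
def IsCanonicalDAG (H : Digraph A) : Prop :=
  H.IsAcyclic ∧ ∀ v, (∀ u, ¬ H.Adj u v) ∨ (∀ u, ¬ H.Adj v u)

/-- `t` lies in a sink component: from its strongly connected component no other
component is reachable. -/
def IsSinkVert (H : Digraph A) (t : A) : Prop := ∀ v, H.Reaches t v → H.Reaches v t

/-- Sink deletion: delete all vertices of the strongly connected component of `t`. -/
def sinkDelete (H : Digraph A) (t : A) :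
    Digraph {v : A // ¬ (H.Reaches v t ∧ H.Reaches t v)} where
  Adj a b := H.Adj a.1 b.1

/-- Loop deletion: delete the loop at `u`. -/
def deleteLoop (H : Digraph A) (u : A) : Digraph A where
  Adj a b := H.Adj a b ∧ ¬(a = u ∧ b = u)

/-- The number of sources (in-degree `0` vertices) of the condensation `H/∼`. -/
def numSources (H : Digraph A) : ℕ :=
  {X : Quotient H.sccSetoid | ∀ Y, ¬ H.cond.Adj Y X}.ncard

end Digraph

/-- The number of homomorphisms from `H` to `G`. -/
def homCount {A B : Type} (H : Digraph A) (G : Digraph B) : ℕ :=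
  Nat.card {φ : A → B // H.IsHom G φ}

/-- Two digraphs are isomorphic: a bijection of the vertex sets preserving arcs in
both directions. -/
def DigraphIso {A B : Type} (H : Digraph A) (G : Digraph B) : Prop :=
  ∃ e : A ≃ B, ∀ u v, H.Adj u v ↔ G.Adj (e u) (e v)

/-- The number of subgraphs of `G` (pairs of a vertex subset and an arc subset of `G`
among those vertices) that are isomorphic to `H`. -/
def subCount {A B : Type} (H : Digraph A) (G : Digraph B) : ℕ :=
  Nat.card {p : Set B × (B → B → Prop) //
    (∀ a b, p.2 a b → a ∈ p.1 ∧ b ∈ p.1 ∧ G.Adj a b) ∧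
    DigraphIso H (Digraph.mk fun (a b : p.1) => p.2 a b)}

/-- The number of vertex subsets of `G` inducing a subgraph isomorphic to `H`. -/
def indSubCount {A B : Type} (H : Digraph A) (G : Digraph B) : ℕ :=
  Nat.card {S : Set B // DigraphIso H (G.induce S)}

/-- `H'` is an arc supergraph of the loop-free digraph `H`: a loop-free digraph on the
same vertex set whose arc set contains that of `H`. -/
def ArcSupergraph {A : Type} (H H' : Digraph A) : Prop :=
  H'.LoopFree ∧ ∀ u v, H.Adj u v → H'.Adj u v

/-- The setoid identifying exactly `u` and `v`. -/
def pairSetoid {A : Type} (u v : A) : Setoid A where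
  r a b := a = b ∨ (a ∈ ({u, v} : Set A) ∧ b ∈ ({u, v} : Set A))
  iseqv := by
    refine ⟨fun _ => Or.inl rfl, ?_, ?_⟩
    · rintro a b (rfl | ⟨h₁, h₂⟩)
      · exact Or.inl rfl
      · exact Or.inr ⟨h₂, h₁⟩
    · rintro a b c (rfl | ⟨h₁, h₂⟩) h
      · exact h
      · rcases h with rfl | ⟨h₃, h₄⟩
        · exact Or.inr ⟨h₁, h₂⟩
        · exact Or.inr ⟨h₁, h₄⟩

/-- Arc contraction: identify the endpoints of the arc `(u,v)`; arcs between `u` and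
`v` do not yield a loop. -/
def Digraph.contractArc {A : Type} (H : Digraph A) (u v : A) :
    Digraph (Quotient (pairSetoid u v)) where
  Adj X Y := ∃ a b, Quotient.mk (pairSetoid u v) a = X ∧ Quotient.mk (pairSetoid u v) b = Y ∧
    H.Adj a b ∧ ¬(a ≠ b ∧ a ∈ ({u, v} : Set A) ∧ b ∈ ({u, v} : Set A))

/-- `MRMinor M H`: `M` is a monotone reversible minor of `H`, i.e. `M` can be
obtained (up to isomorphism) from `H` by a finite sequence of sink deletions,
arc contractions, and loop deletions. -/
inductive MRMinor : ∀ {A : Type}, Digraph A → ∀ {B : Type}, Digraph B → Prop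
  | of_iso {A B : Type} {M : Digraph A} {H : Digraph B} :
      DigraphIso M H → MRMinor M H
  | sink_del {A B : Type} {M : Digraph A} {H : Digraph B} (t : B) :
      H.IsSinkVert t → MRMinor M (H.sinkDelete t) → MRMinor M H
  | contract {A B : Type} {M : Digraph A} {H : Digraph B} (u v : B) :
      H.Adj u v → MRMinor M (H.contractArc u v) → MRMinor M H
  | loop_del {A B : Type} {M : Digraph A} {H : Digraph B} (u : B) :
      H.Adj u u → MRMinor M (H.deleteLoop u) → MRMinor M H

/-- `SinkDelSeq H F`: `F` is obtained from `H` by a finite sequence of sink deletions. -/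
inductive SinkDelSeq : ∀ {A : Type}, Digraph A → ∀ {B : Type}, Digraph B → Prop
  | refl {A : Type} (H : Digraph A) : SinkDelSeq H H
  | step {A : Type} {H : Digraph A} (t : A) {B : Type} {F : Digraph B} :
      H.IsSinkVert t → SinkDelSeq (H.sinkDelete t) F → SinkDelSeq H F

/-- The directed split of an undirected graph `F`: vertices `V(F) ⊕ E(F)`, with arcs
from each edge `e = {u,v}` to `u` and to `v`. -/
def dsplit {α : Type} (F : SimpleGraph α) : Digraph (α ⊕ F.edgeSet) where
  Adj x y :=
    match x, y with
    | Sum.inr e, Sum.inl u => u ∈ e.1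
    | _, _ => False

/-- `D` has an induced matching gadget of size `k`: arcs `(s i, w i)` with the `w i`
pairwise distinct such that no source of `D` reaches two distinct `w i`. -/
def HasIMG {A : Type} (D : Digraph A) (k : ℕ) : Prop :=
  ∃ s w : Fin k → A, (∀ i, D.Adj (s i) (w i)) ∧ Function.Injective w ∧
    ∀ x, D.IsSrc x → ∀ i j, D.Reaches x (w i) → D.Reaches x (w j) → i = j

/-- The maximum size of an induced matching gadget of `D`. -/
def imgNum {A : Type} (D : Digraph A) : ℕ := sSup {k | HasIMG D k}

/-- A fractional cover of a DAG `D`: nonnegative weights on the sources such that each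
non-source is covered with total weight at least 1; the total weight is at least 1. -/
def Digraph.IsFracCover {A : Type} (D : Digraph A) (ψ : A → ℝ) : Prop :=
  (∀ s, 0 ≤ ψ s) ∧ (∀ s, ¬ D.IsSrc s → ψ s = 0) ∧
    (∀ v, ¬ D.IsSrc v → 1 ≤ ∑ᶠ s ∈ {s | D.IsSrc s ∧ v ∈ D.reachSet s}, ψ s) ∧
    1 ≤ ∑ᶠ s ∈ {s | D.IsSrc s}, ψ s

/-- The fractional cover number of a DAG: the minimum weight of a fractional cover. -/
def Digraph.dagFracCoverNum {A : Type} (D : Digraph A) : ℝ :=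
  sInf {w | ∃ ψ : A → ℝ, D.IsFracCover ψ ∧ (∑ᶠ s ∈ {s | D.IsSrc s}, ψ s) = w}

/-- The fractional cover number `ρ*(H)` of a digraph: the fractional cover number of
its condensation. -/
def Digraph.fracCoverNum {A : Type} (G : Digraph A) : ℝ := G.cond.dagFracCoverNum

/-!
Let `q` send each vertex of `H` to its strongly connected component. A vertex lies in a source
component of `H` iff its class is a source of `H/∼`, and `q` preserves and reflects
reachability, so `Γ(H)` is the blow-up of `Γ(H/∼)` along the surjection `q`: its vertices and
hyperedges are exactly the preimages of those of `Γ(H/∼)`. Adaptive width is invariant under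
such blow-ups. A fractional independent set of `Γ(H)` is pushed forward along `q` by summing
over fibres, and one of `Γ(H/∼)` is pushed forward along a section of `q`; in either case a
tree decomposition of the image hypergraph pulls back along the same map, with unchanged bag
weights, so each adaptive width bounds the other.
-/

section Finsum

variable {V : Type} {μ : V → ℝ}

theorem finsum_mem_nonneg_of_nonneg (hμ : ∀ v, 0 ≤ μ v) (A : Set V) :
    0 ≤ ∑ᶠ v ∈ A, μ v :=
  finsum_nonneg fun v => finsum_nonneg fun _ => hμ v

theorem finsum_mem_mono_of_nonneg [Finite V] (hμ : ∀ v, 0 ≤ μ v) {A B : Set V}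
    (h : A ⊆ B) : ∑ᶠ v ∈ A, μ v ≤ ∑ᶠ v ∈ B, μ v := by
  rw [← finsum_mem_add_sdiff h (Set.toFinite B)]
  linarith [finsum_mem_nonneg_of_nonneg hμ (B \ A)]

end Finsum

namespace Hypergraph'

variable {V W : Type}

def fiberSum (g : V → W) (μ : V → ℝ) (w : W) : ℝ := ∑ᶠ v ∈ g ⁻¹' {w}, μ v

theorem finsum_mem_preimage_eq_fiberSum [Finite V] [Finite W] (g : V → W) (μ : V → ℝ)
    (B : Set W) : ∑ᶠ v ∈ g ⁻¹' B, μ v = ∑ᶠ w ∈ B, fiberSum g μ w := by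
  unfold fiberSum
  rw [← finsum_mem_biUnion _ (Set.toFinite B) fun _ _ => Set.toFinite _]
  · congr 1
    ext v
    simp
  · exact fun x _ y _ hxy => (Set.disjoint_singleton.2 hxy).preimage g

theorem isFracIndep_fiberSum [Finite V] [Finite W] {Hs : Hypergraph' V} {Ht : Hypergraph' W}
    (g : V → W) (hverts : Hs.verts ⊆ g ⁻¹' Ht.verts)
    (hedges : ∀ E ∈ Ht.edges, ∃ e ∈ Hs.edges, g ⁻¹' E ⊆ e)
    (hcover : ∀ w ∈ Ht.verts, ∃ E ∈ Ht.edges, w ∈ E) {μ : V → ℝ} (hμ : Hs.IsFracIndep μ) :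
    Ht.IsFracIndep (fiberSum g μ) := by
  obtain ⟨hμ01, hμzero, hμedges⟩ := hμ
  have hnonneg : ∀ v, 0 ≤ μ v := fun v => (hμ01 v).1
  have hsum_le : ∀ E ∈ Ht.edges, ∑ᶠ v ∈ g ⁻¹' E, μ v ≤ 1 := fun E hE =>
    let ⟨e, he, hsub⟩ := hedges E hE
    (finsum_mem_mono_of_nonneg hnonneg hsub).trans (hμedges e he)
  have hzero : ∀ w, w ∉ Ht.verts → fiberSum g μ w = 0 := fun w hw =>
    finsum_mem_eq_zero_of_forall_eq_zero fun v hv =>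
      hμzero v fun hv' => hw (by simpa [show g v = w from hv] using hverts hv')
  refine ⟨fun w => ⟨finsum_mem_nonneg_of_nonneg hnonneg _, ?_⟩, hzero, fun E hE => ?_⟩
  · by_cases hw : w ∈ Ht.verts
    · obtain ⟨E, hE, hwE⟩ := hcover w hw
      exact (finsum_mem_mono_of_nonneg hnonneg
        (Set.preimage_mono (Set.singleton_subset_iff.2 hwE))).trans (hsum_le E hE)
    · rw [hzero w hw]
      exact zero_le_one
  · rw [← finsum_mem_preimage_eq_fiberSum]
    exact hsum_le E hE

def TreeDecomp.single (H : Hypergraph' V) : H.TreeDecomp where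
  n := 1
  tree := ⊥
  isTree := ⟨(SimpleGraph.connected_iff _).2 ⟨fun a b => Subsingleton.elim a b ▸ .refl _, ⟨0⟩⟩,
    SimpleGraph.isAcyclic_bot⟩
  bag _ := H.verts
  bag_subset _ := le_rfl
  verts_covered _ hv := ⟨0, hv⟩
  edges_covered e he := ⟨0, H.edge_subset e he⟩
  bags_connected _ t₁ t₂ _ _ := by obtain rfl := Subsingleton.elim t₁ t₂; rfl

theorem TreeDecomp.muWidth_single (H : Hypergraph' V) (μ : V → ℝ) :
    (TreeDecomp.single H).muWidth μ = ∑ᶠ v ∈ H.verts, μ v :=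
  show (⨆ _ : Fin 1, ∑ᶠ v ∈ H.verts, μ v) = _ from ciSup_const

def TreeDecomp.comap {Hs : Hypergraph' V} {Ht : Hypergraph' W} (g : V → W)
    (hverts : Hs.verts = g ⁻¹' Ht.verts) (hedges : ∀ e ∈ Hs.edges, ∃ E ∈ Ht.edges, e ⊆ g ⁻¹' E)
    (td : Ht.TreeDecomp) : Hs.TreeDecomp where
  n := td.n
  tree := td.tree
  isTree := td.isTree
  bag t := g ⁻¹' td.bag t
  bag_subset t _ hv := hverts.symm.subset (td.bag_subset t hv)
  verts_covered v hv := td.verts_covered (g v) (hverts.subset hv)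
  edges_covered e he := by
    obtain ⟨E, hE, heE⟩ := hedges e he
    obtain ⟨t, ht⟩ := td.edges_covered E hE
    exact ⟨t, heE.trans (Set.preimage_mono ht)⟩
  bags_connected v := td.bags_connected (g v)

theorem TreeDecomp.muWidth_comap [Finite V] [Finite W] {Hs : Hypergraph' V}
    {Ht : Hypergraph' W} (g : V → W) (hverts : Hs.verts = g ⁻¹' Ht.verts)
    (hedges : ∀ e ∈ Hs.edges, ∃ E ∈ Ht.edges, e ⊆ g ⁻¹' E) (td : Ht.TreeDecomp) (μ : V → ℝ) :
    (td.comap g hverts hedges).muWidth μ = td.muWidth (fiberSum g μ) :=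
  iSup_congr fun t => finsum_mem_preimage_eq_fiberSum g μ (td.bag t)

theorem TreeDecomp.muWidth_nonneg {H : Hypergraph' V} (td : H.TreeDecomp) {μ : V → ℝ}
    (hμ : ∀ v, 0 ≤ μ v) : 0 ≤ td.muWidth μ := by
  obtain ⟨t⟩ : Nonempty (Fin td.n) := td.isTree.connected.nonempty
  exact (finsum_mem_nonneg_of_nonneg hμ _).trans
    (le_ciSup (Set.finite_range fun t => ∑ᶠ v ∈ td.bag t, μ v).bddAbove t)

theorem muWidth_le {H : Hypergraph' V} (td : H.TreeDecomp) {μ : V → ℝ} (hμ : ∀ v, 0 ≤ μ v) :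
    H.muWidth μ ≤ td.muWidth μ :=
  csInf_le ⟨0, by rintro w ⟨td', rfl⟩; exact td'.muWidth_nonneg hμ⟩ ⟨td, rfl⟩

theorem muWidth_le_muWidth_fiberSum [Finite V] [Finite W] {Hs : Hypergraph' V}
    {Ht : Hypergraph' W} (g : V → W) (hverts : Hs.verts = g ⁻¹' Ht.verts)
    (hedges : ∀ e ∈ Hs.edges, ∃ E ∈ Ht.edges, e ⊆ g ⁻¹' E) {μ : V → ℝ} (hμ : ∀ v, 0 ≤ μ v) :
    Hs.muWidth μ ≤ Ht.muWidth (fiberSum g μ) := by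
  refine le_csInf ⟨_, TreeDecomp.single Ht, rfl⟩ ?_
  rintro w ⟨td, rfl⟩
  rw [← td.muWidth_comap g hverts hedges]
  exact muWidth_le _ hμ

theorem bddAbove_muWidth_fracIndep [Finite V] (H : Hypergraph' V) :
    BddAbove {w | ∃ μ : V → ℝ, H.IsFracIndep μ ∧ H.muWidth μ = w} := by
  have := Fintype.ofFinite V
  refine ⟨Fintype.card V, ?_⟩
  rintro w ⟨μ, hμ, rfl⟩
  calc H.muWidth μ ≤ ∑ᶠ v ∈ H.verts, μ v := by
        rw [← TreeDecomp.muWidth_single]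
        exact muWidth_le _ fun v => (hμ.1 v).1
    _ ≤ ∑ᶠ v, μ v :=
        (finsum_mem_mono_of_nonneg (fun v => (hμ.1 v).1) (Set.subset_univ _)).trans_eq
          (finsum_mem_univ μ)
    _ = ∑ v, μ v := finsum_eq_sum_of_fintype μ
    _ ≤ ∑ _v : V, (1 : ℝ) := Finset.sum_le_sum fun v _ => (hμ.1 v).2
    _ = Fintype.card V := by simp

theorem nonempty_muWidth_fracIndep (H : Hypergraph' V) :
    {w | ∃ μ : V → ℝ, H.IsFracIndep μ ∧ H.muWidth μ = w}.Nonempty :=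
  ⟨_, 0, ⟨fun _ => ⟨le_rfl, zero_le_one⟩, fun _ _ => rfl, fun _ _ => by simp⟩, rfl⟩

theorem adaptiveWidth_le_of_map [Finite V] [Finite W] {Hs : Hypergraph' V}
    {Ht : Hypergraph' W} (g : V → W) (hverts : Hs.verts = g ⁻¹' Ht.verts)
    (hedges_sub : ∀ e ∈ Hs.edges, ∃ E ∈ Ht.edges, e ⊆ g ⁻¹' E)
    (hedges_sup : ∀ E ∈ Ht.edges, ∃ e ∈ Hs.edges, g ⁻¹' E ⊆ e)
    (hcover : ∀ w ∈ Ht.verts, ∃ E ∈ Ht.edges, w ∈ E) :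
    Hs.adaptiveWidth ≤ Ht.adaptiveWidth := by
  refine csSup_le (nonempty_muWidth_fracIndep Hs) ?_
  rintro w ⟨μ, hμ, rfl⟩
  exact (muWidth_le_muWidth_fiberSum g hverts hedges_sub fun v => (hμ.1 v).1).trans
    (le_csSup (bddAbove_muWidth_fracIndep Ht)
      ⟨_, isFracIndep_fiberSum g hverts.le hedges_sup hcover hμ, rfl⟩)

theorem adaptiveWidth_eq_of_surjective [Finite V] [Finite W] {Hs : Hypergraph' V}
    {Ht : Hypergraph' W} (f : V → W) (hf : Function.Surjective f)
    (hverts : Hs.verts = f ⁻¹' Ht.verts) (hedges : Hs.edges = (f ⁻¹' ·) '' Ht.edges)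
    (hcover : ∀ w ∈ Ht.verts, ∃ E ∈ Ht.edges, w ∈ E) :
    Hs.adaptiveWidth = Ht.adaptiveWidth := by
  have hsection : ∀ E : Set W, Function.surjInv hf ⁻¹' (f ⁻¹' E) = E := fun E => by
    ext w
    simp [Function.surjInv_eq hf]
  have hpreimage : ∀ E ∈ Ht.edges, f ⁻¹' E ∈ Hs.edges := fun E hE => by
    rw [hedges]
    exact ⟨E, hE, rfl⟩
  apply le_antisymm
  · refine adaptiveWidth_le_of_map f hverts ?_ (fun E hE => ⟨_, hpreimage E hE, subset_rfl⟩) hcover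
    rw [hedges]
    rintro _ ⟨E, hE, rfl⟩
    exact ⟨E, hE, subset_rfl⟩
  · refine adaptiveWidth_le_of_map (Function.surjInv hf) (by rw [hverts, hsection])
      (fun E hE => ⟨_, hpreimage E hE, (hsection E).ge⟩) ?_ ?_
    · rw [hedges]
      rintro _ ⟨E, hE, rfl⟩
      exact ⟨E, hE, (hsection E).le⟩
    · intro v hv
      obtain ⟨E, hE, hvE⟩ := hcover (f v) (hverts.subset hv)
      exact ⟨_, hpreimage E hE, hvE⟩

end Hypergraph'

namespace Digraph

variable {V : Type} (G : Digraph V)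

theorem reaches_cond_mk_iff {u v : V} :
    G.cond.Reaches (Quotient.mk _ u) (Quotient.mk _ v) ↔ G.Reaches u v := by
  constructor
  · suffices ∀ X Y, G.cond.Reaches X Y → ∀ u v, Quotient.mk _ u = X → Quotient.mk _ v = Y →
        G.Reaches u v from fun h => this _ _ h u v rfl rfl
    intro X Y h
    induction h with
    | refl => exact fun u v hu hv => (Quotient.exact (hu.trans hv.symm)).1
    | tail _ hadj ih =>
      obtain ⟨-, a, b, ha, hb, hab⟩ := hadj
      exact fun u v hu hv => ((ih u a hu ha).tail hab).trans (Quotient.exact (hb.trans hv.symm)).1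
  · refine fun h => Relation.ReflTransGen.lift' (r := G.Adj) (p := G.cond.Adj) _
      (fun a b hab => ?_) _ _ h
    show Relation.ReflTransGen G.cond.Adj (Quotient.mk _ a) (Quotient.mk _ b)
    by_cases hq : Quotient.mk G.sccSetoid a = Quotient.mk G.sccSetoid b
    · rw [hq]
    · exact .single ⟨hq, a, b, rfl, rfl, hab⟩

theorem inSourceComp_cond_mk_iff (v : V) :
    G.cond.InSourceComp (Quotient.mk _ v) ↔ G.InSourceComp v := by
  simp only [InSourceComp, Quotient.forall, reaches_cond_mk_iff]

theorem exists_inSourceComp_reaches [Finite V] (v : V) :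
    ∃ s, G.InSourceComp s ∧ G.Reaches s v := by
  let r : V → V → Prop := fun u w => G.Reaches u w ∧ ¬ G.Reaches w u
  have : IsTrans V r :=
    ⟨fun a b c hab hbc => ⟨hab.1.trans hbc.1, fun hca => hbc.2 (hca.trans hab.1)⟩⟩
  have : Std.Irrefl r := ⟨fun a h => h.2 h.1⟩
  obtain ⟨s, hs, hmin⟩ := (Finite.wellFounded_of_trans_of_irrefl r).has_min
    {u | G.Reaches u v} ⟨v, .refl⟩
  exact ⟨s, fun u hu => not_not.1 fun h => hmin u (hu.trans hs) ⟨hu, h⟩, hs⟩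

theorem exists_mem_contour_edge [Finite V] {v : V} (hv : v ∈ G.contour.verts) :
    ∃ e ∈ G.contour.edges, v ∈ e := by
  obtain ⟨s, hs, hsv⟩ := G.exists_inSourceComp_reaches v
  exact ⟨_, ⟨⟨s, hs, rfl⟩, v, hsv, hv⟩, hsv, hv⟩

theorem contour_verts_eq_preimage_cond :
    G.contour.verts = Quotient.mk _ ⁻¹' G.cond.contour.verts := by
  ext v
  exact (G.inSourceComp_cond_mk_iff v).not.symm

theorem preimage_cond_reachSet_diff (s : V) :
    Quotient.mk _ ⁻¹' (G.cond.reachSet (Quotient.mk _ s) \ {X | G.cond.InSourceComp X}) =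
      G.reachSet s \ {v | G.InSourceComp v} := by
  ext v
  simp [reachSet, reaches_cond_mk_iff, inSourceComp_cond_mk_iff]

theorem contour_edges_eq_preimage_cond :
    G.contour.edges = (Quotient.mk _ ⁻¹' ·) '' G.cond.contour.edges := by
  ext e
  constructor
  · rintro ⟨⟨s, hs, rfl⟩, hne⟩
    refine ⟨_, ⟨⟨_, (G.inSourceComp_cond_mk_iff s).2 hs, rfl⟩, ?_⟩,
      G.preimage_cond_reachSet_diff s⟩
    rw [← G.preimage_cond_reachSet_diff s] at hne
    obtain ⟨v, hv⟩ := hne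
    exact ⟨_, hv⟩
  · rintro ⟨_, ⟨⟨S, hS, rfl⟩, hne⟩, rfl⟩
    induction S using Quotient.inductionOn with | h s => ?_
    have hne' := hne.preimage Quotient.mk_surjective
    dsimp only
    rw [G.preimage_cond_reachSet_diff s] at hne' ⊢
    exact ⟨⟨s, (G.inSourceComp_cond_mk_iff s).1 hS, rfl⟩, hne'⟩

end Digraph

theorem stmt3 {V : Type} [Fintype V] (H : Digraph V) :
    H.contour.adaptiveWidth = H.cond.contour.adaptiveWidth :=
  Hypergraph'.adaptiveWidth_eq_of_surjective _ Quotient.mk_surjective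
    H.contour_verts_eq_preimage_cond H.contour_edges_eq_preimage_cond
    fun _ => H.cond.exists_mem_contour_edge

end
end

section
/- Let H be a canonical DAG with at least one arc and let R(H) be its reachability hypergraph. Then the adaptive width of the contour of H is at least the adaptive width of the reachability hypergraph: aw(Γ(H)) ≥ aw(R(H)). -/
noncomputable section

/-!
Restricted to the non-sources, a fractional independent set `μ` of `R(H)` is fractionally
independent in `Γ(H)`. As `H` is canonical and has an arc, `Γ(H)` has a hyperedge, and raising the
restriction at one vertex makes some hyperedge tight; the resulting `μ'` gives every tree
decomposition of `Γ(H)` width at least `1`. Distinct sources never reach one another, so hanging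
a leaf bag `R(s)` below a bag containing `R(s) \ {sources}` turns a tree decomposition of `Γ(H)`
into one of `R(H)`: the new bags have `μ`-weight at most `1`, and the old ones have `μ`-weight at
most their `μ'`-weight.
-/

section finsum

variable {α M : Type*} [Finite α] [AddCommMonoid M] {s t : Set α} {f g : α → M}

theorem finsum_mem_add_single [DecidableEq α] (a : α) (c : M) [Decidable (a ∈ s)] :
    ∑ᶠ b ∈ s, (f + Pi.single a c : α → M) b = ∑ᶠ b ∈ s, f b + if a ∈ s then c else 0 := by
  simp only [Pi.add_apply]
  rw [finsum_mem_add_distrib s.toFinite, finsum_mem_def (f := Pi.single a c),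
    finsum_eq_single (s.indicator (Pi.single a c)) a fun b hb => by simp [hb]]
  simp [Set.indicator_apply]

variable [PartialOrder M] [IsOrderedAddMonoid M]

theorem finsum_mem_le_finsum_mem (h : ∀ a ∈ s, f a ≤ g a) :
    ∑ᶠ a ∈ s, f a ≤ ∑ᶠ a ∈ s, g a := by
  rw [finsum_mem_eq_finite_toFinset_sum _ s.toFinite,
    finsum_mem_eq_finite_toFinset_sum _ s.toFinite]
  exact Finset.sum_le_sum fun a ha => h a (s.toFinite.mem_toFinset.1 ha)

theorem finsum_mem_le_finsum_mem_of_subset (hst : s ⊆ t) (hf : ∀ a, 0 ≤ f a) :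
    ∑ᶠ a ∈ s, f a ≤ ∑ᶠ a ∈ t, f a := by
  rw [finsum_mem_eq_finite_toFinset_sum _ s.toFinite,
    finsum_mem_eq_finite_toFinset_sum _ t.toFinite]
  exact Finset.sum_le_sum_of_subset_of_nonneg (Set.Finite.toFinset_subset_toFinset.2 hst)
    fun a _ _ => hf a

theorem le_finsum_mem {a : α} (ha : a ∈ s) (hf : ∀ a, 0 ≤ f a) : f a ≤ ∑ᶠ b ∈ s, f b := by
  simpa only [finsum_mem_singleton] using
    finsum_mem_le_finsum_mem_of_subset (Set.singleton_subset_iff.2 ha) hf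

end finsum

namespace SimpleGraph

variable {V W : Type*}

theorem Reachable.map_of_adj_or_eq {G : SimpleGraph V} {G' : SimpleGraph W} {φ : V → W}
    (hφ : ∀ x y, G.Adj x y → φ x = φ y ∨ G'.Adj (φ x) (φ y)) {x y : V} (h : G.Reachable x y) :
    G'.Reachable (φ x) (φ y) := by
  rw [reachable_iff_reflTransGen] at h ⊢
  exact h.lift' φ fun a b hab =>
    (hφ a b hab).elim (fun e => by simp only [Function.onFun, e]; exact .refl) .single

def attachLeaves (T : SimpleGraph V) (f : W → V) : SimpleGraph (V ⊕ W) where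
  Adj
    | .inl a, .inl a' => T.Adj a a'
    | .inl a, .inr b => f b = a
    | .inr b, .inl a => f b = a
    | .inr _, .inr _ => False
  symm := ⟨by
    rintro (a | b) (a' | b') h
    exacts [h.symm, h, h, h]⟩
  loopless := ⟨by
    rintro (a | b) h
    exacts [T.loopless.irrefl a h, h]⟩

variable {T : SimpleGraph V} {f : W → V}

theorem Connected.attachLeaves (hT : T.Connected) (f : W → V) : (T.attachLeaves f).Connected := by
  have := hT.nonempty
  have reach_inl : ∀ x, (T.attachLeaves f).Reachable x (.inl (Sum.elim id f x)) := by
    rintro (a | b)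
    exacts [.rfl, Adj.reachable (show f b = f b from rfl)]
  refine ⟨fun x y => ((reach_inl x).trans ?_).trans (reach_inl y).symm⟩
  exact (hT.preconnected _ _).map (⟨Sum.inl, id⟩ : T →g T.attachLeaves f)

theorem attachLeaves_isBridge_inr_inl {a : V} {b : W} (h : f b = a) :
    (T.attachLeaves f).IsBridge s(.inr b, .inl a) := by
  rw [isBridge_iff]
  rintro ⟨_ | @⟨-, a' | b', -, ⟨hadj, hne⟩, -⟩⟩
  · exact hne (by simpa using (show f b = a' from hadj).symm.trans h)
  · exact hadj

theorem IsAcyclic.attachLeaves (hT : T.IsAcyclic) (f : W → V) :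
    (T.attachLeaves f).IsAcyclic := by
  rw [isAcyclic_iff_forall_adj_isBridge]
  rintro (a | b) (a' | b') h
  · -- a path avoiding the tree edge retracts, via `Sum.elim id f`, to one in `T`
    rw [isBridge_iff]
    intro hr
    refine isAcyclic_iff_forall_adj_isBridge.1 hT h (hr.map_of_adj_or_eq (φ := Sum.elim id f) ?_)
    rintro (c | d) (c' | d') ⟨hcc, hne⟩
    · exact .inr ⟨hcc, by simpa using hne⟩
    · exact .inl (show f d' = c from hcc).symm
    · exact .inl hcc
    · exact hcc.elim
  · rw [Sym2.eq_swap]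
    exact attachLeaves_isBridge_inr_inl h
  · exact attachLeaves_isBridge_inr_inl h
  · exact h.elim

theorem IsTree.attachLeaves (hT : T.IsTree) (f : W → V) : (T.attachLeaves f).IsTree :=
  ⟨hT.connected.attachLeaves f, hT.isAcyclic.attachLeaves f⟩

end SimpleGraph

namespace Hypergraph'

open SimpleGraph

variable {V : Type} {K K₀ : Hypergraph' V} {μ : V → ℝ}

theorem isFracIndep_zero (K : Hypergraph' V) : K.IsFracIndep 0 :=
  ⟨fun _ => ⟨le_rfl, zero_le_one⟩, fun _ _ => rfl, fun _ _ => by simp⟩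

theorem IsFracIndep.indicator [Finite V] (hμ : K₀.IsFracIndep μ)
    (h : ∀ e ∈ K.edges, ∃ e₀ ∈ K₀.edges, e ⊆ e₀) : K.IsFracIndep (K.verts.indicator μ) := by
  refine ⟨fun v => ?_, fun v hv => Set.indicator_of_notMem hv μ, fun e he => ?_⟩
  · by_cases hv : v ∈ K.verts
    · simpa only [Set.indicator_of_mem hv] using hμ.1 v
    · simp only [Set.indicator_of_notMem hv, le_refl, zero_le_one, and_self]
  · obtain ⟨e₀, he₀, hee₀⟩ := h e he
    calc ∑ᶠ v ∈ e, K.verts.indicator μ v = ∑ᶠ v ∈ e, μ v :=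
          finsum_mem_congr rfl fun v hv => Set.indicator_of_mem (K.edge_subset e he hv) μ
      _ ≤ ∑ᶠ v ∈ e₀, μ v := finsum_mem_le_finsum_mem_of_subset hee₀ fun v => (hμ.1 v).1
      _ ≤ 1 := hμ.2.2 e₀ he₀

/-- Raising `μ` at a vertex `v₀` by the slack of the heaviest edge through `v₀` keeps it
fractionally independent and makes that edge tight. -/
theorem IsFracIndep.exists_le_finsum_eq_one [Finite V] (hμ : K.IsFracIndep μ)
    (hK : K.edges.Nonempty) :
    ∃ μ', K.IsFracIndep μ' ∧ μ ≤ μ' ∧ ∃ e ∈ K.edges, ∑ᶠ v ∈ e, μ' v = 1 := by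
  classical
  obtain ⟨e₀, he₀⟩ := hK
  obtain ⟨v₀, hv₀⟩ := K.edge_nonempty e₀ he₀
  obtain ⟨e₁, ⟨he₁, hv₁⟩, hmax⟩ := Set.exists_max_image {e | e ∈ K.edges ∧ v₀ ∈ e}
    (fun e => ∑ᶠ v ∈ e, μ v) (Set.toFinite _) ⟨e₀, he₀, hv₀⟩
  set δ := 1 - ∑ᶠ v ∈ e₁, μ v with hδ_def
  have hδ : 0 ≤ δ := sub_nonneg.2 (hμ.2.2 e₁ he₁)
  have hsum (e : Set V) : ∑ᶠ v ∈ e, (μ + Pi.single v₀ δ : V → ℝ) v =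
      ∑ᶠ v ∈ e, μ v + if v₀ ∈ e then δ else 0 := finsum_mem_add_single v₀ δ
  have hle : μ ≤ μ + Pi.single v₀ δ := le_add_of_nonneg_right (Pi.single_nonneg.2 hδ)
  refine ⟨μ + Pi.single v₀ δ, ⟨fun v => ⟨(hμ.1 v).1.trans (hle v), ?_⟩, fun v hvK => ?_,
    fun e he => ?_⟩, hle, e₁, he₁, by rw [hsum, if_pos hv₁, hδ_def, add_sub_cancel]⟩
  · by_cases hv : v = v₀
    · subst hv
      have hv_le := le_finsum_mem hv₁ fun v => (hμ.1 v).1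
      simp only [Pi.add_apply, Pi.single_eq_same]
      linarith
    · simpa [Pi.single_eq_of_ne hv] using (hμ.1 v).2
  · have hv : v ≠ v₀ := fun h => hvK (h ▸ K.edge_subset e₀ he₀ hv₀)
    simp [Pi.single_eq_of_ne hv, hμ.2.1 v hvK]
  · rw [hsum]
    split_ifs with hv
    · linarith [hmax e ⟨he, hv⟩]
    · simpa using hμ.2.2 e he

namespace TreeDecomp

def ofFinite {ι : Type} [Finite ι] (T : SimpleGraph ι) (hT : T.IsTree) (B : ι → Set V)
    (hB : ∀ i, B i ⊆ K.verts) (hverts : ∀ v ∈ K.verts, ∃ i, v ∈ B i)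
    (hedges : ∀ e ∈ K.edges, ∃ i, e ⊆ B i)
    (hconn : ∀ v i j (hi : v ∈ B i) (hj : v ∈ B j),
      (T.induce {i | v ∈ B i}).Reachable ⟨i, hi⟩ ⟨j, hj⟩) :
    K.TreeDecomp where
  n := Nat.card ι
  tree := T.comap (Finite.equivFin ι).symm
  isTree := (Iso.comap _ T).isTree_iff.2 hT
  bag t := B ((Finite.equivFin ι).symm t)
  bag_subset _ := hB _
  verts_covered v hv := by
    obtain ⟨i, hi⟩ := hverts v hv
    exact ⟨Finite.equivFin ι i, by simpa using hi⟩
  edges_covered e he := by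
    obtain ⟨i, hi⟩ := hedges e he
    exact ⟨Finite.equivFin ι i, by simpa using hi⟩
  bags_connected v t₁ t₂ h₁ h₂ := by
    let φ : T.induce {i | v ∈ B i} →g
        (T.comap (Finite.equivFin ι).symm).induce {t | v ∈ B ((Finite.equivFin ι).symm t)} :=
      ⟨fun x => ⟨Finite.equivFin ι x, by simpa only [Set.mem_ofPred_eq, Equiv.symm_apply_apply]
        using x.2⟩, fun h => by simpa using h⟩
    convert (hconn v _ _ h₁ h₂).map φ <;> exact (Equiv.apply_symm_apply _ _).symm

theorem muWidth_le (td : K.TreeDecomp) {w : ℝ} (h : ∀ t, ∑ᶠ v ∈ td.bag t, μ v ≤ w)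
    (hw : 0 ≤ w) : td.muWidth μ ≤ w :=
  Real.iSup_le h hw

theorem muWidth_nonneg_s13 (td : K.TreeDecomp) (hμ : ∀ v, 0 ≤ μ v) : 0 ≤ td.muWidth μ :=
  Real.iSup_nonneg fun _ => finsum_nonneg fun v => finsum_nonneg fun _ => hμ v

theorem finsum_bag_le_muWidth (td : K.TreeDecomp) (t : Fin td.n) :
    ∑ᶠ v ∈ td.bag t, μ v ≤ td.muWidth μ :=
  le_ciSup (f := fun t => ∑ᶠ v ∈ td.bag t, μ v) (Set.finite_range _).bddAbove t

variable [Finite V]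

theorem finsum_edge_le_muWidth (td : K.TreeDecomp) (hμ : ∀ v, 0 ≤ μ v) {e : Set V}
    (he : e ∈ K.edges) : ∑ᶠ v ∈ e, μ v ≤ td.muWidth μ := by
  obtain ⟨t, ht⟩ := td.edges_covered e he
  exact (finsum_mem_le_finsum_mem_of_subset ht hμ).trans (td.finsum_bag_le_muWidth t)

end TreeDecomp

def trivialDecomp (K : Hypergraph' V) : K.TreeDecomp :=
  .ofFinite (⊥ : SimpleGraph Unit) .of_subsingleton (fun _ => K.verts) (fun _ => subset_rfl)
    (fun _ hv => ⟨(), hv⟩) (fun e he => ⟨(), K.edge_subset e he⟩)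
    (fun _ _ _ _ _ => .of_subsingleton)

theorem muWidth_le_treeDecomp (hμ : ∀ v, 0 ≤ μ v) (td : K.TreeDecomp) :
    K.muWidth μ ≤ td.muWidth μ :=
  csInf_le ⟨0, by rintro _ ⟨td, rfl⟩; exact td.muWidth_nonneg_s13 hμ⟩ ⟨td, rfl⟩

theorem le_muWidth {a : ℝ} (h : ∀ td : K.TreeDecomp, a ≤ td.muWidth μ) : a ≤ K.muWidth μ :=
  le_csInf ⟨_, K.trivialDecomp, rfl⟩ (by rintro _ ⟨td, rfl⟩; exact h td)

theorem bddAbove_muWidth [Finite V] (K : Hypergraph' V) :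
    BddAbove {w | ∃ μ, K.IsFracIndep μ ∧ K.muWidth μ = w} := by
  refine ⟨∑ᶠ v ∈ K.verts, 1, ?_⟩
  rintro _ ⟨μ, hμ, rfl⟩
  refine (muWidth_le_treeDecomp (fun v => (hμ.1 v).1) K.trivialDecomp).trans
    (TreeDecomp.muWidth_le _ (fun _ => finsum_mem_le_finsum_mem fun v _ => (hμ.1 v).2) ?_)
  exact finsum_nonneg fun _ => finsum_nonneg fun _ => zero_le_one

theorem adaptiveWidth_le_adaptiveWidth [Finite V] {K' : Hypergraph' V}
    (h : ∀ μ, K.IsFracIndep μ → ∃ μ', K'.IsFracIndep μ' ∧ K.muWidth μ ≤ K'.muWidth μ') :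
    K.adaptiveWidth ≤ K'.adaptiveWidth := by
  refine csSup_le ⟨_, 0, K.isFracIndep_zero, rfl⟩ ?_
  rintro _ ⟨μ, hμ, rfl⟩
  obtain ⟨μ', hμ', hle⟩ := h μ hμ
  exact hle.trans (le_csSup K'.bddAbove_muWidth ⟨μ', hμ', rfl⟩)

theorem TreeDecomp.reachable_attachLeaves (td : K₀.TreeDecomp) {β : Type} (L : β → Set V)
    {f : β → Fin td.n} (hf : ∀ b, L b ∩ K₀.verts ⊆ td.bag (f b))
    (hL : Pairwise fun b b' => L b ∩ L b' ⊆ K₀.verts) {v : V} {i j : Fin td.n ⊕ β}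
    (hi : v ∈ Sum.elim td.bag L i) (hj : v ∈ Sum.elim td.bag L j) :
    ((td.tree.attachLeaves f).induce {i | v ∈ Sum.elim td.bag L i}).Reachable
      ⟨i, hi⟩ ⟨j, hj⟩ := by
  set G := (td.tree.attachLeaves f).induce {i | v ∈ Sum.elim td.bag L i}
  by_cases hv : v ∈ K₀.verts
  · obtain ⟨t₀, ht₀⟩ := td.verts_covered v hv
    have reach_tree (t : Fin td.n) (ht : v ∈ td.bag t) : G.Reachable ⟨.inl t, ht⟩ ⟨.inl t₀, ht₀⟩ :=
      (td.bags_connected v t t₀ ht ht₀).map (G' := G) ⟨fun x => ⟨.inl x.1, x.2⟩, id⟩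
    suffices ∀ i hi, G.Reachable ⟨i, hi⟩ ⟨.inl t₀, ht₀⟩ from (this i hi).trans (this j hj).symm
    rintro (t | b) hi
    · exact reach_tree t hi
    · have hfb : v ∈ td.bag (f b) := hf b ⟨hi, hv⟩
      exact Adj.reachable (show f b = f b from rfl) |>.trans (reach_tree _ hfb)
  · obtain rfl : i = j := by
      rcases i with t | b
      · exact absurd (td.bag_subset t hi) hv
      rcases j with t | b'
      · exact absurd (td.bag_subset t hj) hv
      by_contra hbb
      exact hv (hL (fun h => hbb (congrArg _ h)) ⟨hi, hj⟩)
    rfl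

end Hypergraph'

namespace Digraph

open Hypergraph'

variable {V : Type} {H : Digraph V}

theorem IsSrc.eq_of_reaches {s v : V} (hv : H.IsSrc v) (h : H.Reaches s v) : s = v := by
  rcases Relation.ReflTransGen.cases_tail h with h | ⟨u, -, hu⟩
  · exact h.symm
  · exact (hv u hu).elim

theorem dagContour_edges_nonempty (hH : H.IsCanonicalDAG) (harc : ∃ u v, H.Adj u v) :
    H.dagContour.edges.Nonempty := by
  obtain ⟨u, v, huv⟩ := harc
  have hu : H.IsSrc u := (hH.2 u).resolve_right fun h => h v huv
  exact ⟨_, ⟨u, hu, rfl⟩, v, .single huv, fun hv => hv u huv⟩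

theorem exists_dagReachHyp_edge_superset {e : Set V} (he : e ∈ H.dagContour.edges) :
    ∃ e₀ ∈ H.dagReachHyp.edges, e ⊆ e₀ := by
  obtain ⟨⟨s, hs, rfl⟩, -⟩ := he
  exact ⟨_, ⟨s, hs, rfl⟩, Set.sdiff_subset⟩

theorem exists_reachSet_inter_subset_bag (td : H.dagContour.TreeDecomp) {s : V} (hs : H.IsSrc s) :
    ∃ t, H.reachSet s ∩ H.dagContour.verts ⊆ td.bag t := by
  by_cases hne : (H.reachSet s ∩ H.dagContour.verts).Nonempty
  · exact td.edges_covered _ ⟨⟨s, hs, rfl⟩, hne⟩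
  · obtain ⟨t⟩ := td.isTree.connected.nonempty
    exact ⟨t, by simp [Set.not_nonempty_iff_eq_empty.1 hne]⟩

variable [Finite V]

def reachDecomp (td : H.dagContour.TreeDecomp) : H.dagReachHyp.TreeDecomp :=
  .ofFinite
    (td.tree.attachLeaves fun s : {s // H.IsSrc s} => (exists_reachSet_inter_subset_bag td s.2).choose)
    (td.isTree.attachLeaves _) (Sum.elim td.bag fun s => H.reachSet s)
    (fun _ => Set.subset_univ _)
    (fun v _ => by
      by_cases hv : H.IsSrc v
      · exact ⟨.inr ⟨v, hv⟩, .refl⟩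
      · obtain ⟨t, ht⟩ := td.verts_covered v hv
        exact ⟨.inl t, ht⟩)
    (by rintro _ ⟨s, hs, rfl⟩; exact ⟨.inr ⟨s, hs⟩, subset_rfl⟩)
    (fun _ _ _ hi hj => td.reachable_attachLeaves _
      (fun s => (exists_reachSet_inter_subset_bag td s.2).choose_spec)
      (fun s s' hss' w hw hsrc => hss' (Subtype.ext
        ((hsrc.eq_of_reaches hw.1).trans (hsrc.eq_of_reaches hw.2).symm)))
      hi hj)

theorem muWidth_reachDecomp_le (td : H.dagContour.TreeDecomp) {μ μ' : V → ℝ}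
    (hμ : H.dagReachHyp.IsFracIndep μ) (hle : ∀ v, ¬ H.IsSrc v → μ v ≤ μ' v)
    (h1 : 1 ≤ td.muWidth μ') : (reachDecomp td).muWidth μ ≤ td.muWidth μ' := by
  refine TreeDecomp.muWidth_le _ (fun t => ?_) (zero_le_one.trans h1)
  change ∑ᶠ v ∈ Sum.elim td.bag (fun s : {s // H.IsSrc s} => H.reachSet s)
    ((Finite.equivFin _).symm t), μ v ≤ _
  generalize (Finite.equivFin _).symm t = i
  rcases i with t | ⟨s, hs⟩
  · exact (finsum_mem_le_finsum_mem fun v hv => hle v (td.bag_subset t hv)).trans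
      (td.finsum_bag_le_muWidth t)
  · exact (hμ.2.2 _ ⟨s, hs, rfl⟩).trans h1

theorem exists_muWidth_dagReachHyp_le (hH : H.IsCanonicalDAG) (harc : ∃ u v, H.Adj u v)
    {μ : V → ℝ} (hμ : H.dagReachHyp.IsFracIndep μ) :
    ∃ μ', H.dagContour.IsFracIndep μ' ∧ H.dagReachHyp.muWidth μ ≤ H.dagContour.muWidth μ' := by
  obtain ⟨μ', hμ', hle, e, he, htight⟩ :=
    (hμ.indicator fun _ => exists_dagReachHyp_edge_superset).exists_le_finsum_eq_one
      (dagContour_edges_nonempty hH harc)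
  refine ⟨μ', hμ', le_muWidth fun td => ?_⟩
  calc H.dagReachHyp.muWidth μ ≤ (reachDecomp td).muWidth μ :=
        muWidth_le_treeDecomp (fun v => (hμ.1 v).1) _
    _ ≤ td.muWidth μ' := by
        refine muWidth_reachDecomp_le td hμ (fun v hv => ?_) ?_
        · simpa [Set.indicator_of_mem (show v ∈ H.dagContour.verts from hv)] using hle v
        · exact htight ▸ td.finsum_edge_le_muWidth (fun v => (hμ'.1 v).1) he

end Digraph

theorem stmt13 {V : Type} [Fintype V] (H : Digraph V)
    (h1 : H.IsCanonicalDAG) (h2 : ∃ u v, H.Adj u v) :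
    H.dagReachHyp.adaptiveWidth ≤ H.dagContour.adaptiveWidth :=
  Hypergraph'.adaptiveWidth_le_adaptiveWidth fun _ hμ =>
    Digraph.exists_muWidth_dagReachHyp_le h1 h2 hμ
end
end
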